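/- Suppose A, B ∈ GL(n,F_2) satisfy A^a + A^b = A^c + I and B^a + B^b = B^c + I for integers a, b, c, and F : F_2^n → F_2^n satisfies F∘A = B∘F. If g ∈ F_2^n is such that the four points g, A^a g, A^b g, A^c g are pairwise distinct, then F(A^a g) + F(A^b g) + F(A^c g) + F(g) = 0, and hence F is not APN. -/

import Mathlib

/-!
A linear identity `A^a + A^b = A^c + I` turns the four points `g, A^a g, A^b g, A^c g` into a
"quadrilateral" `A^a g + A^b g = A^c g + g`; since `F` intertwines `A` with `B` and `B` satisfies
the same identity, `F` maps it to a quadrilateral of values. In characteristic 2, a quadrilateral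
`x + y = z + w` with `F x + F y = F z + F w` gives four solutions of `F t + F (t + α) = β` for
`α = x + z`, `β = F x + F z`, so `F` is not APN.
-/

open Matrix Function

def IsAPN {V W : Type*} [AddCommGroup V] [AddCommGroup W] (F : V → W) : Prop :=
  ∀ α : V, α ≠ 0 → ∀ β : W, {t | F t + F (t + α) = β}.ncard ≤ 2

section CharTwo

variable {V W : Type*} [AddCommGroup V] [Module (ZMod 2) V] [AddCommGroup W] [Module (ZMod 2) W]

theorem apply_add_apply_add_eq_of_add_eq_add {F : V → W} {w x y z : V} (hsum : x + y = z + w)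
    (hF : F x + F y = F z + F w) :
    ∀ t ∈ [w, x, y, z], F t + F (t + (x + z)) = F x + F z := by
  have hw : w + (x + z) = y := by linear_combination (norm := abel) -hsum + ZModModule.add_self x
  have hx : x + (x + z) = z := by linear_combination (norm := abel) ZModModule.add_self x
  have hy : y + (x + z) = w := by linear_combination (norm := abel) hsum + ZModModule.add_self z
  have hz : z + (x + z) = x := by linear_combination (norm := abel) ZModModule.add_self z
  have hFwy : F w + F y = F x + F z := by
    linear_combination (norm := abel) hF + ZModModule.add_self (F w) - ZModModule.add_self (F x)
  simp only [List.forall_mem_cons, List.not_mem_nil, IsEmpty.forall_iff, implies_true, and_true]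
  refine ⟨?_, ?_, ?_, ?_⟩
  · rw [hw, hFwy]
  · rw [hx]
  · rw [hy, add_comm, hFwy]
  · rw [hz, add_comm]

theorem not_isAPN_of_add_eq_add [Finite V] {F : V → W} {w x y z : V}
    (hdist : [w, x, y, z].Pairwise (· ≠ ·)) (hsum : x + y = z + w)
    (hF : F x + F y = F z + F w) : ¬ IsAPN F := by
  classical
  intro hAPN
  have hα : x + z ≠ 0 := fun h => by
    simp only [List.pairwise_cons, List.mem_cons] at hdist
    exact hdist.2.1 z (by simp) (by linear_combination (norm := abel) h - ZModModule.add_self z)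
  have hsub : ([w, x, y, z].toFinset : Set V) ⊆ {t | F t + F (t + (x + z)) = F x + F z} :=
    fun t ht => apply_add_apply_add_eq_of_add_eq_add hsum hF t (List.mem_toFinset.1 ht)
  have hcard : ([w, x, y, z].toFinset : Set V).ncard = 4 := by
    rw [Set.ncard_coe_finset, List.toFinset_card_of_nodup (List.nodup_iff_pairwise_ne.2 hdist)]
    rfl
  have := Set.ncard_le_ncard hsub
  have := hAPN (x + z) hα (F x + F z)
  omega

end CharTwo

theorem Function.Semiconj.pow_mulVec {ι κ R : Type*} [Fintype ι] [DecidableEq ι] [Fintype κ]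
    [DecidableEq κ] [CommSemiring R] {F : (ι → R) → (κ → R)} {A : Matrix ι ι R}
    {B : Matrix κ κ R} (h : Semiconj F (A *ᵥ ·) (B *ᵥ ·)) (k : ℕ) :
    Semiconj F (A ^ k *ᵥ ·) (B ^ k *ᵥ ·) := by
  induction k with
  | zero => intro x; simp only [pow_zero, one_mulVec]
  | succ k ih =>
    intro x
    simp only [pow_succ, ← mulVec_mulVec, h x, ih (A *ᵥ x)]

/-- If `A^a + A^b = A^c + I`, `B^a + B^b = B^c + I`, `F ∘ A = B ∘ F`, and the four points
`g, A^a g, A^b g, A^c g` are pairwise distinct, then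
`F(A^a g) + F(A^b g) + F(A^c g) + F(g) = 0` and `F` is not APN. -/
theorem stmt_16 (n : ℕ) (F : (Fin n → ZMod 2) → (Fin n → ZMod 2))
    (A B : Matrix (Fin n) (Fin n) (ZMod 2)) (a b c : ℕ)
    (hA : A ^ a + A ^ b = A ^ c + 1) (hB : B ^ a + B ^ b = B ^ c + 1)
    (hcomm : ∀ x, F (A.mulVec x) = B.mulVec (F x))
    (g : Fin n → ZMod 2)
    (hdist : [g, (A ^ a).mulVec g, (A ^ b).mulVec g, (A ^ c).mulVec g].Pairwise (· ≠ ·)) :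
    F ((A ^ a).mulVec g) + F ((A ^ b).mulVec g) + F ((A ^ c).mulVec g) + F g = 0 ∧
    ¬ (∀ α : Fin n → ZMod 2, α ≠ 0 → ∀ β : Fin n → ZMod 2,
      Set.ncard {x : Fin n → ZMod 2 | F x + F (x + α) = β} ≤ 2) := by
  have hsum : A ^ a *ᵥ g + A ^ b *ᵥ g = A ^ c *ᵥ g + g := by
    rw [← add_mulVec, hA, add_mulVec, one_mulVec]
  have hF : F (A ^ a *ᵥ g) + F (A ^ b *ᵥ g) = F (A ^ c *ᵥ g) + F g := by
    simp only [Semiconj.pow_mulVec hcomm _ g]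
    rw [← add_mulVec, hB, add_mulVec, one_mulVec]
  refine ⟨?_, not_isAPN_of_add_eq_add hdist hsum hF⟩
  linear_combination (norm := abel) hF + ZModModule.add_self (F (A ^ c *ᵥ g)) +
    ZModModule.add_self (F g)
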